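/- The map sending a rooted planar tree with n edges to its height sequence is a bijection between the set of rooted planar trees with n edges and the set ℍ_n of sequences H(0),...,H(n) with H(0)=0, H(i) > 0 and H(i) − H(i−1) ≤ 1 for all i ≥ 1. -/

import Mathlib

/-- A rooted planar tree: a finite, prefix-closed set of words on `ℕ` containing the
empty word, closed under taking smaller siblings. -/
def IsPlanarTree (T : Finset (List ℕ)) : Prop :=
  ([] ∈ T) ∧
  (∀ u ∈ T, ∀ v : List ℕ, v <+: u → v ∈ T) ∧
  (∀ (u : List ℕ) (i : ℕ), u ++ [i] ∈ T → ∀ j < i, u ++ [j] ∈ T)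

/-- The `k`-th vertex of `T` in lexicographic order. -/
noncomputable def vtx (T : Finset (List ℕ)) (k : ℕ) : List ℕ :=
  (T.sort (· ≤ ·)).getD k []

/-- The height sequence: `HT T k` is the depth of the `k`-th vertex in lex. order. -/
noncomputable def HT (T : Finset (List ℕ)) (k : ℕ) : ℕ := (vtx T k).length

/-!
In lexicographic order, prefix- and sibling-closure force the successor of a vertex `u` of a planar
tree to be `nextWord u d` for some `d ≤ |u|`: keep the first `d` letters of `u` and increase the
next one, or append `0` if `d = |u|`. Its depth is `d + 1`, so the height sequence determines every
vertex recursively. Conversely, for any sequence in `ℍ_n` the same recursion produces a strictly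
increasing list of words, and inserting `nextWord u d` next to `u` preserves both closure
properties, so these words form a planar tree with the given heights.
-/

open Finset

theorem List.isPrefix_or_exists_of_lt {α : Type*} [LT α] {u v : List α} (h : u < v) :
    u <+: v ∨ ∃ p a t b s, a < b ∧ u = p ++ a :: t ∧ v = p ++ b :: s := by
  induction (h : List.Lex (· < ·) u v) with
  | nil => exact Or.inl nil_prefix
  | @rel a t b s hab => exact Or.inr ⟨[], a, t, b, s, hab, rfl, rfl⟩
  | @cons a _ _ _ ih =>
    rcases ih with hp | ⟨p, x, t, y, s, hxy, rfl, rfl⟩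
    · exact Or.inl ((prefix_cons_inj a).2 hp)
    · exact Or.inr ⟨a :: p, x, t, y, s, hxy, rfl, rfl⟩

theorem List.append_singleton_le_append_cons {p s : List ℕ} {c b : ℕ} (h : c ≤ b) :
    p ++ [c] ≤ p ++ b :: s := by
  rcases h.eq_or_lt with rfl | h
  -- core's `IsPrefix.le` concludes core's `l₁ ≤ l₂`, i.e. `¬ l₂ < l₁`, not Mathlib's `≤`
  · exact not_lt.1 (IsPrefix.le (by simp))
  · exact (append_left_lt (Lex.rel h : Lex (· < ·) [c] (b :: s))).le

def nextWord : List ℕ → ℕ → List ℕ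
  | [], _ => [0]
  | a :: _, 0 => [a + 1]
  | a :: u, d + 1 => a :: nextWord u d

theorem nextWord_ne_nil (u : List ℕ) (d : ℕ) : nextWord u d ≠ [] := by
  cases u <;> cases d <;> simp [nextWord]

theorem length_nextWord {u : List ℕ} {d : ℕ} (hd : d ≤ u.length) :
    (nextWord u d).length = d + 1 := by
  induction u generalizing d with
  | nil => simp_all [nextWord]
  | cons a u ih =>
    cases d with
    | zero => rfl
    | succ d => simp [nextWord, ih (by simpa using hd)]

theorem lt_nextWord : ∀ (u : List ℕ) (d : ℕ), u < nextWord u d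
  | [], _ => List.nil_lt_cons _ _
  | a :: _, 0 => List.Lex.rel (Nat.lt_succ_self a)
  | _ :: u, d + 1 => List.Lex.cons (lt_nextWord u d)

theorem nextWord_length (u : List ℕ) : nextWord u u.length = u ++ [0] := by
  induction u with
  | nil => rfl
  | cons a u ih => simp [nextWord, ih]

theorem nextWord_append_cons (p t : List ℕ) (a : ℕ) :
    nextWord (p ++ a :: t) p.length = p ++ [a + 1] := by
  induction p with
  | nil => rfl
  | cons b p ih => simp [nextWord, ih]

theorem isPrefix_or_eq_of_isPrefix_nextWord {u v : List ℕ} {d : ℕ} (h : v <+: nextWord u d) :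
    v <+: u ∨ v = nextWord u d := by
  induction u generalizing v d with
  | nil =>
    rcases List.prefix_cons_iff.1 h with rfl | ⟨t, rfl, ht⟩
    · exact Or.inl List.nil_prefix
    · simp_all [nextWord]
  | cons a u ih =>
    cases d with
    | zero =>
      rcases List.prefix_cons_iff.1 h with rfl | ⟨t, rfl, ht⟩
      · exact Or.inl List.nil_prefix
      · simp_all [nextWord]
    | succ d =>
      rcases List.prefix_cons_iff.1 h with rfl | ⟨t, rfl, ht⟩
      · exact Or.inl List.nil_prefix
      · rcases ih ht with ht | rfl
        · exact Or.inl ((List.prefix_cons_inj a).2 ht)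
        · exact Or.inr rfl

theorem exists_isPrefix_of_append_singleton_eq_nextWord {u x : List ℕ} {d i j : ℕ}
    (h : x ++ [i] = nextWord u d) (hji : j < i) : ∃ i', j ≤ i' ∧ x ++ [i'] <+: u := by
  induction u generalizing x d with
  | nil =>
    obtain ⟨-, rfl⟩ : x = [] ∧ i = 0 := by
      simpa [nextWord, List.append_eq_singleton_iff] using h
    omega
  | cons a u ih =>
    cases d with
    | zero =>
      obtain ⟨rfl, rfl⟩ : x = [] ∧ i = a + 1 := by
        simpa [nextWord, List.append_eq_singleton_iff] using h
      exact ⟨a, by omega, by simp⟩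
    | succ d =>
      cases x with
      | nil => simp [nextWord, nextWord_ne_nil, eq_comm] at h
      | cons b x =>
        obtain ⟨rfl, hx⟩ : b = a ∧ x ++ [i] = nextWord u d := by simpa [nextWord] using h
        obtain ⟨i', hji', hx⟩ := ih hx
        exact ⟨i', hji', (List.prefix_cons_inj b).2 hx⟩

namespace IsPlanarTree

variable {T : Finset (List ℕ)}

theorem append_singleton_mem (hT : IsPlanarTree T) {p v : List ℕ} {b c : ℕ} (hv : v ∈ T)
    (hp : p ++ [b] <+: v) (hcb : c ≤ b) : p ++ [c] ∈ T := by
  have hb := hT.2.1 v hv _ hp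
  rcases hcb.eq_or_lt with rfl | hlt
  · exact hb
  · exact hT.2.2 p b hb c hlt

theorem exists_nextWord_mem_le (hT : IsPlanarTree T) {u v : List ℕ} (hv : v ∈ T) (huv : u < v) :
    ∃ d ≤ u.length, nextWord u d ∈ T ∧ nextWord u d ≤ v := by
  rcases List.isPrefix_or_exists_of_lt huv with ⟨t, rfl⟩ | ⟨p, a, t, b, s, hab, rfl, rfl⟩
  · obtain ⟨j, t, rfl⟩ := List.exists_cons_of_ne_nil (show t ≠ [] by rintro rfl; simp at huv)
    refine ⟨u.length, le_rfl, ?_⟩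
    rw [nextWord_length]
    exact ⟨hT.append_singleton_mem hv ⟨t, by simp⟩ (Nat.zero_le j),
      List.append_singleton_le_append_cons (Nat.zero_le j)⟩
  · refine ⟨p.length, by simp, ?_⟩
    rw [nextWord_append_cons]
    exact ⟨hT.append_singleton_mem hv ⟨s, by simp⟩ hab,
      List.append_singleton_le_append_cons hab⟩

theorem insert_nextWord (hT : IsPlanarTree T) {u : List ℕ} (hu : u ∈ T) (d : ℕ) :
    IsPlanarTree (insert (nextWord u d) T) := by
  refine ⟨mem_insert_of_mem hT.1, fun w hw v hvw => ?_, fun x i hxi j hji => ?_⟩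
  · rcases mem_insert.1 hw with rfl | hw
    · rcases isPrefix_or_eq_of_isPrefix_nextWord hvw with hvu | rfl
      · exact mem_insert_of_mem (hT.2.1 u hu v hvu)
      · exact mem_insert_self _ _
    · exact mem_insert_of_mem (hT.2.1 w hw v hvw)
  · refine mem_insert_of_mem ?_
    rcases mem_insert.1 hxi with hxi | hxi
    · obtain ⟨i', hji', hxu⟩ := exists_isPrefix_of_append_singleton_eq_nextWord hxi hji
      exact hT.append_singleton_mem hu hxu hji'
    · exact hT.2.2 x i hxi j hji

end IsPlanarTree

section vtx

variable {T : Finset (List ℕ)} {k : ℕ}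

theorem vtx_eq_orderEmbOfFin (hk : k < T.card) : vtx T k = T.orderEmbOfFin rfl ⟨k, hk⟩ :=
  List.getD_eq_getElem _ _ _

theorem vtx_of_card_le (hk : T.card ≤ k) : vtx T k = [] :=
  List.getD_eq_default _ _ (by simpa using hk)

theorem vtx_mem (hk : k < T.card) : vtx T k ∈ T := by
  rw [vtx_eq_orderEmbOfFin hk]
  exact orderEmbOfFin_mem T rfl _

theorem vtx_strictMonoOn (T : Finset (List ℕ)) : StrictMonoOn (vtx T) (Set.Iio T.card) := by
  intro j hj k hk hjk
  rw [vtx_eq_orderEmbOfFin hj, vtx_eq_orderEmbOfFin hk]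
  exact (T.orderEmbOfFin rfl).strictMono (Fin.mk_lt_mk.2 hjk)

theorem exists_vtx_eq {x : List ℕ} (hx : x ∈ T) : ∃ k < T.card, vtx T k = x := by
  obtain ⟨i, rfl⟩ : x ∈ Set.range (T.orderEmbOfFin rfl) := by simpa using hx
  exact ⟨i, i.2, vtx_eq_orderEmbOfFin i.2⟩

theorem image_vtx (T : Finset (List ℕ)) : (range T.card).image (vtx T) = T := by
  ext x
  simp only [mem_image, mem_range]
  exact ⟨fun ⟨k, hk, hx⟩ => hx ▸ vtx_mem hk, exists_vtx_eq⟩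

theorem vtx_succ_le {x : List ℕ} (hk : k + 1 < T.card) (hx : x ∈ T) (hlt : vtx T k < x) :
    vtx T (k + 1) ≤ x := by
  obtain ⟨j, hj, rfl⟩ := exists_vtx_eq hx
  have hkj : k < j := ((vtx_strictMonoOn T).lt_iff_lt (Set.mem_Iio.2 (by omega)) hj).1 hlt
  exact ((vtx_strictMonoOn T).le_iff_le hk hj).2 hkj

theorem vtx_eq_of_strictMonoOn {f : ℕ → List ℕ} (hf : StrictMonoOn f (Set.Iio T.card))
    (hfT : ∀ k < T.card, f k ∈ T) (hk : k < T.card) : vtx T k = f k := by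
  have := orderEmbOfFin_unique (s := T) rfl (f := fun i => f i) (fun i => hfT i i.2)
    (fun i j hij => hf i.2 j.2 hij)
  rw [vtx_eq_orderEmbOfFin hk, ← this]

theorem IsPlanarTree.vtx_zero (hT : IsPlanarTree T) : vtx T 0 = [] := by
  obtain ⟨k, hk, hvk⟩ := exists_vtx_eq hT.1
  have h0 : vtx T 0 ≤ [] := hvk ▸ (vtx_strictMonoOn T).monotoneOn (Set.mem_Iio.2 (by omega)) hk
    (Nat.zero_le k)
  exact (le_iff_lt_or_eq.1 h0).resolve_left (List.not_lt_nil _)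

theorem IsPlanarTree.exists_vtx_succ_eq_nextWord (hT : IsPlanarTree T) (hk : k + 1 < T.card) :
    ∃ d ≤ HT T k, vtx T (k + 1) = nextWord (vtx T k) d ∧ HT T (k + 1) = d + 1 := by
  have hlt : vtx T k < vtx T (k + 1) :=
    vtx_strictMonoOn T (Set.mem_Iio.2 (by omega)) hk (Nat.lt_succ_self k)
  obtain ⟨d, hd, hmem, hle⟩ := hT.exists_nextWord_mem_le (vtx_mem hk) hlt
  have heq : vtx T (k + 1) = nextWord (vtx T k) d :=
    le_antisymm (vtx_succ_le hk hmem (lt_nextWord _ _)) hle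
  exact ⟨d, hd, heq, by rw [HT, heq, length_nextWord hd]⟩

end vtx

def wordsOfHeights (H : ℕ → ℕ) : ℕ → List ℕ
  | 0 => []
  | k + 1 => nextWord (wordsOfHeights H k) (H (k + 1) - 1)

def treeOfHeights (H : ℕ → ℕ) (n : ℕ) : Finset (List ℕ) :=
  (range (n + 1)).image (wordsOfHeights H)

theorem wordsOfHeights_strictMono (H : ℕ → ℕ) : StrictMono (wordsOfHeights H) :=
  strictMono_nat_of_lt_succ fun _ => lt_nextWord _ _

theorem length_wordsOfHeights {H : ℕ → ℕ} {n : ℕ} (h0 : H 0 = 0)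
    (hH : ∀ k < n, 0 < H (k + 1) ∧ H (k + 1) ≤ H k + 1) :
    ∀ k ≤ n, (wordsOfHeights H k).length = H k
  | 0, _ => h0.symm
  | k + 1, hk => by
    obtain ⟨hpos, hle⟩ := hH k hk
    have ih := length_wordsOfHeights h0 hH k (by omega)
    rw [wordsOfHeights, length_nextWord (by omega)]
    omega

theorem IsPlanarTree.vtx_eq_wordsOfHeights {T : Finset (List ℕ)} (hT : IsPlanarTree T) :
    ∀ {k}, k < T.card → vtx T k = wordsOfHeights (HT T) k
  | 0, _ => hT.vtx_zero
  | k + 1, hk => by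
    obtain ⟨d, -, hv, hd⟩ := hT.exists_vtx_succ_eq_nextWord hk
    rw [hv, wordsOfHeights, hd, Nat.add_sub_cancel, hT.vtx_eq_wordsOfHeights (by omega)]

theorem IsPlanarTree.eq_treeOfHeights {T : Finset (List ℕ)} {n : ℕ} (hT : IsPlanarTree T)
    (hc : T.card = n + 1) : T = treeOfHeights (HT T) n := by
  conv_lhs => rw [← image_vtx T]
  rw [treeOfHeights, ← hc]
  exact image_congr fun k hk => hT.vtx_eq_wordsOfHeights (mem_range.1 hk)

theorem card_treeOfHeights (H : ℕ → ℕ) (n : ℕ) : (treeOfHeights H n).card = n + 1 := by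
  rw [treeOfHeights, card_image_of_injective _ (wordsOfHeights_strictMono H).injective,
    card_range]

theorem isPlanarTree_treeOfHeights (H : ℕ → ℕ) : ∀ n, IsPlanarTree (treeOfHeights H n)
  | 0 => by simp [treeOfHeights, wordsOfHeights, IsPlanarTree]
  | n + 1 => by
    rw [treeOfHeights, range_add_one, image_insert]
    exact (isPlanarTree_treeOfHeights H n).insert_nextWord
      (mem_image_of_mem _ (self_mem_range_succ n)) _

theorem HT_treeOfHeights {H : ℕ → ℕ} {n k : ℕ} (h0 : H 0 = 0)
    (hH : ∀ k < n, 0 < H (k + 1) ∧ H (k + 1) ≤ H k + 1) (hk : k ≤ n) :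
    HT (treeOfHeights H n) k = H k := by
  have hmem : ∀ k < (treeOfHeights H n).card, wordsOfHeights H k ∈ treeOfHeights H n :=
    fun k hk => mem_image_of_mem _ (mem_range.2 (card_treeOfHeights H n ▸ hk))
  rw [HT, vtx_eq_of_strictMonoOn ((wordsOfHeights_strictMono H).strictMonoOn _) hmem
    (by rw [card_treeOfHeights]; omega)]
  exact length_wordsOfHeights h0 hH k hk

/-- the map sending a rooted planar tree with `n` edges to its height
sequence (padded by `0` after index `n`) is a bijection onto the set `ℍ_n` of sequences
with `H(0) = 0`, and `H(i) ≤ H(i-1) + 1` and `H(i) > 0` for `1 ≤ i ≤ n`. -/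
theorem tree_height_bijection (n : ℕ) :
    Set.BijOn (fun T : Finset (List ℕ) => HT T)
      {T : Finset (List ℕ) | IsPlanarTree T ∧ T.card = n + 1}
      {H : ℕ → ℕ | H 0 = 0 ∧ (∀ i : ℕ, 1 ≤ i → i ≤ n → H i ≤ H (i-1) + 1 ∧ 0 < H i) ∧
        ∀ i : ℕ, n < i → H i = 0} := by
  refine ⟨?_, ?_, ?_⟩
  · rintro T ⟨hT, hc⟩
    refine ⟨congrArg List.length hT.vtx_zero, fun i hi hin => ?_, fun i hi => ?_⟩
    · obtain ⟨k, rfl⟩ := Nat.exists_eq_add_of_le' hi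
      obtain ⟨d, hd, -, hHT⟩ := hT.exists_vtx_succ_eq_nextWord (k := k) (by omega)
      simp only [Nat.add_sub_cancel]
      omega
    · exact congrArg List.length (vtx_of_card_le (by omega))
  · rintro T ⟨hT, hc⟩ T' ⟨hT', hc'⟩ (h : HT T = HT T')
    rw [hT.eq_treeOfHeights hc, hT'.eq_treeOfHeights hc', h]
  · rintro H ⟨h0, hH, htail⟩
    have hH' : ∀ k < n, 0 < H (k + 1) ∧ H (k + 1) ≤ H k + 1 :=
      fun k hk => (hH (k + 1) (by omega) hk).symm
    refine ⟨treeOfHeights H n, ⟨isPlanarTree_treeOfHeights H n, card_treeOfHeights H n⟩,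
      funext fun k => ?_⟩
    rcases le_or_gt k n with hk | hk
    · exact HT_treeOfHeights h0 hH' hk
    · have hcard : (treeOfHeights H n).card ≤ k := by rw [card_treeOfHeights]; omega
      rw [htail k hk]
      exact congrArg List.length (vtx_of_card_le hcard)
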